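/- Define Ψ : ℝ⁵ → ℝ⁵ by Ψ(x,y,z,p,q) = (x₂,y₂,z₂,p₂,q₂) where x₂ = (3x+p)/4, y₂ = (12^{2/3}/8)·y, z₂ = −(z + p²/6)/4, p₂ = −p/3, q₂ = −(12^{1/3}/6)·q. Then Ψ is a bijection of ℝ⁵, and for every point m = (x,y,z,p,q) and tangent vector v = (v_x,v_y,v_z,v_p,v_q) ∈ ℝ⁵: (i) Dz₂(v) − p₂(m)·Dx₂(v) − q₂(m)·Dy₂(v) = −(1/4)·(v_z − p·v_x − q·v_y); (ii) 8·Dy₂(v)² − 3·Dp₂(v)·Dq₂(v) − 4·Dx₂(v)·Dq₂(v) = (12^{1/3}/2)·(v_q·v_x + 3v_y²); (iii) 9·Dp₂(v)² + 12·Dp₂(v)·Dx₂(v) + 4·Dy₂(v)·Dq₂(v) = −(3v_p·v_x + v_y·v_q); (iv) Dq₂(v)² + 6·Dy₂(v)·Dp₂(v) = −(12^{2/3}/36)·(9v_p·v_y − v_q²), where Df(v) denotes the Fréchet derivative of the component function f at m applied to v. -/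
import Mathlib

noncomputable section

/-- Points (and tangent vectors) of `ℝ⁵`, coordinates `(x, y, z, p, q)`. -/
abbrev R5 : Type := ℝ × ℝ × ℝ × ℝ × ℝ

namespace Stmt11

/-- First component `x₂ = (3x + p)/4` of the coordinate diffeomorphism. -/
def x₂ (m : R5) : ℝ := (3 * m.1 + m.2.2.2.1) / 4
/-- Second component `y₂ = (12^{2/3}/8)·y`. -/
def y₂ (m : R5) : ℝ := ((12 : ℝ) ^ ((2 : ℝ) / 3) / 8) * m.2.1
/-- Third component `z₂ = −(z + p²/6)/4`. -/
def z₂ (m : R5) : ℝ := -(m.2.2.1 + m.2.2.2.1 ^ 2 / 6) / 4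
/-- Fourth component `p₂ = −p/3`. -/
def p₂ (m : R5) : ℝ := -m.2.2.2.1 / 3
/-- Fifth component `q₂ = −(12^{1/3}/6)·q`. -/
def q₂ (m : R5) : ℝ := -((12 : ℝ) ^ ((1 : ℝ) / 3) / 6) * m.2.2.2.2

/-- The coordinate diffeomorphism `Ψ` from the non-standard contact structure associated to
the parametrization `(t,H) = (2s^{2/3}/(1+2s), -4s^{1/3}/(1+2s))` to the standard one. -/
def Ψ (m : R5) : R5 := (x₂ m, y₂ m, z₂ m, p₂ m, q₂ m)

end Stmt11

open Stmt11

section Aux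

/-- Projection to the `x` coordinate, as a continuous linear map. -/
def πX : R5 →L[ℝ] ℝ := ContinuousLinearMap.fst ℝ ℝ (ℝ × ℝ × ℝ × ℝ)
/-- Projection to the `y` coordinate. -/
def πY : R5 →L[ℝ] ℝ :=
  (ContinuousLinearMap.fst ℝ ℝ (ℝ × ℝ × ℝ)).comp (ContinuousLinearMap.snd ℝ ℝ (ℝ × ℝ × ℝ × ℝ))
/-- Projection to the `z` coordinate. -/
def πZ : R5 →L[ℝ] ℝ :=
  (ContinuousLinearMap.fst ℝ ℝ (ℝ × ℝ)).comp
    ((ContinuousLinearMap.snd ℝ ℝ (ℝ × ℝ × ℝ)).comp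
      (ContinuousLinearMap.snd ℝ ℝ (ℝ × ℝ × ℝ × ℝ)))
/-- Projection to the `p` coordinate. -/
def πP : R5 →L[ℝ] ℝ :=
  (ContinuousLinearMap.fst ℝ ℝ ℝ).comp
    ((ContinuousLinearMap.snd ℝ ℝ (ℝ × ℝ)).comp
      ((ContinuousLinearMap.snd ℝ ℝ (ℝ × ℝ × ℝ)).comp
        (ContinuousLinearMap.snd ℝ ℝ (ℝ × ℝ × ℝ × ℝ))))
/-- Projection to the `q` coordinate. -/
def πQ : R5 →L[ℝ] ℝ :=
  (ContinuousLinearMap.snd ℝ ℝ ℝ).comp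
    ((ContinuousLinearMap.snd ℝ ℝ (ℝ × ℝ)).comp
      ((ContinuousLinearMap.snd ℝ ℝ (ℝ × ℝ × ℝ)).comp
        (ContinuousLinearMap.snd ℝ ℝ (ℝ × ℝ × ℝ × ℝ))))

@[simp] lemma πX_apply (v : R5) : πX v = v.1 := rfl
@[simp] lemma πY_apply (v : R5) : πY v = v.2.1 := rfl
@[simp] lemma πZ_apply (v : R5) : πZ v = v.2.2.1 := rfl
@[simp] lemma πP_apply (v : R5) : πP v = v.2.2.2.1 := rfl
@[simp] lemma πQ_apply (v : R5) : πQ v = v.2.2.2.2 := rfl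

lemma hX (m : R5) : HasFDerivAt (fun m : R5 => m.1) πX m := πX.hasFDerivAt
lemma hY (m : R5) : HasFDerivAt (fun m : R5 => m.2.1) πY m := πY.hasFDerivAt
lemma hZ (m : R5) : HasFDerivAt (fun m : R5 => m.2.2.1) πZ m := πZ.hasFDerivAt
lemma hP (m : R5) : HasFDerivAt (fun m : R5 => m.2.2.2.1) πP m := πP.hasFDerivAt
lemma hQ (m : R5) : HasFDerivAt (fun m : R5 => m.2.2.2.2) πQ m := πQ.hasFDerivAt

lemma fd_x (m v : R5) : fderiv ℝ x₂ m v = (3 * v.1 + v.2.2.2.1) / 4 := by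
  have h : HasFDerivAt x₂ _ m := (((hX m).const_mul 3).add (hP m)).mul_const (4:ℝ)⁻¹
  rw [h.fderiv]
  simp [smul_eq_mul]
  ring

lemma fd_y (m v : R5) : fderiv ℝ y₂ m v = ((12 : ℝ) ^ ((2 : ℝ) / 3) / 8) * v.2.1 := by
  have h : HasFDerivAt y₂ _ m := (hY m).const_mul ((12 : ℝ) ^ ((2 : ℝ) / 3) / 8)
  rw [h.fderiv]
  simp [smul_eq_mul]

lemma fd_z (m v : R5) :
    fderiv ℝ z₂ m v = -(v.2.2.1 + m.2.2.2.1 * v.2.2.2.1 / 3) / 4 := by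
  have hfun : z₂ = fun m : R5 => -(m.2.2.1 + m.2.2.2.1 * m.2.2.2.1 / 6) / 4 := by
    funext n; simp only [z₂, pow_two]
  rw [hfun]
  have h : HasFDerivAt (fun m : R5 => -(m.2.2.1 + m.2.2.2.1 * m.2.2.2.1 / 6) / 4) _ m :=
    (((hZ m).add (((hP m).mul (hP m)).mul_const (6:ℝ)⁻¹)).neg).mul_const (4:ℝ)⁻¹
  rw [h.fderiv]
  simp [smul_eq_mul]
  ring

lemma fd_p (m v : R5) : fderiv ℝ p₂ m v = -v.2.2.2.1 / 3 := by
  have h : HasFDerivAt p₂ _ m := ((hP m).neg).mul_const (3:ℝ)⁻¹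
  rw [h.fderiv]
  simp [smul_eq_mul]
  ring

lemma fd_q (m v : R5) :
    fderiv ℝ q₂ m v = -((12 : ℝ) ^ ((1 : ℝ) / 3) / 6) * v.2.2.2.2 := by
  have h : HasFDerivAt q₂ _ m := (hQ m).const_mul (-((12 : ℝ) ^ ((1 : ℝ) / 3) / 6))
  rw [h.fderiv]
  simp [smul_eq_mul]

end Aux

/-- `Ψ` is a bijection of `ℝ⁵`, pulls back the standard contact form to `−(1/4)·ϖ`, and
pulls back the symmetric bilinear forms of the non-standard structure to constant multiples
of the standard forms `g₁ = dqdx + 3dy²`, `g₃ = 3dpdx + dydq`, `g₂ = 9dpdy − dq²`. -/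
theorem coordinate_diffeo_pullback_two :
    Function.Bijective Ψ ∧
    ∀ m v : R5,
      (fderiv ℝ z₂ m v - p₂ m * fderiv ℝ x₂ m v - q₂ m * fderiv ℝ y₂ m v
        = -(1 / 4) * (v.2.2.1 - m.2.2.2.1 * v.1 - m.2.2.2.2 * v.2.1))
      ∧ (8 * (fderiv ℝ y₂ m v) ^ 2 - 3 * fderiv ℝ p₂ m v * fderiv ℝ q₂ m v
            - 4 * fderiv ℝ x₂ m v * fderiv ℝ q₂ m v
          = ((12 : ℝ) ^ ((1 : ℝ) / 3) / 2) * (v.2.2.2.2 * v.1 + 3 * v.2.1 ^ 2))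
      ∧ (9 * (fderiv ℝ p₂ m v) ^ 2 + 12 * fderiv ℝ p₂ m v * fderiv ℝ x₂ m v
            + 4 * fderiv ℝ y₂ m v * fderiv ℝ q₂ m v
          = -(3 * v.2.2.2.1 * v.1 + v.2.1 * v.2.2.2.2))
      ∧ ((fderiv ℝ q₂ m v) ^ 2 + 6 * fderiv ℝ y₂ m v * fderiv ℝ p₂ m v
          = -((12 : ℝ) ^ ((2 : ℝ) / 3) / 36) * (9 * v.2.2.2.1 * v.2.1 - v.2.2.2.2 ^ 2)) := by
  have hc1 : (0:ℝ) < (12:ℝ) ^ ((1:ℝ)/3) := Real.rpow_pos_of_pos (by norm_num) _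
  have hc2pos : (0:ℝ) < (12:ℝ) ^ ((2:ℝ)/3) := Real.rpow_pos_of_pos (by norm_num) _
  have hc3 : ((12:ℝ) ^ ((1:ℝ)/3)) ^ 3 = 12 := by
    rw [← Real.rpow_natCast ((12:ℝ) ^ ((1:ℝ)/3)) 3, ← Real.rpow_mul (by norm_num)]
    norm_num
  have hc2 : (12:ℝ) ^ ((2:ℝ)/3) = ((12:ℝ) ^ ((1:ℝ)/3)) ^ 2 := by
    rw [← Real.rpow_natCast ((12:ℝ) ^ ((1:ℝ)/3)) 2, ← Real.rpow_mul (by norm_num)]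
    norm_num
  constructor
  · rw [Function.bijective_iff_has_inverse]
    refine ⟨fun w => ((4 * w.1 + 3 * w.2.2.2.1) / 3, 8 * w.2.1 / (12:ℝ) ^ ((2:ℝ)/3),
      -4 * w.2.2.1 - 3 * w.2.2.2.1 ^ 2 / 2, -3 * w.2.2.2.1,
      -6 * w.2.2.2.2 / (12:ℝ) ^ ((1:ℝ)/3)), ?_, ?_⟩
    · intro m
      obtain ⟨x, y, z, p, q⟩ := m
      simp only [Ψ, x₂, y₂, z₂, p₂, q₂, Prod.mk.injEq]
      refine ⟨by ring, ?_, by ring, by ring, ?_⟩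
      · field_simp <;> ring
      · field_simp <;> ring
    · intro w
      obtain ⟨a, b, c, d, e⟩ := w
      simp only [Ψ, x₂, y₂, z₂, p₂, q₂, Prod.mk.injEq]
      refine ⟨by ring, ?_, by ring, by ring, ?_⟩
      · field_simp <;> ring
      · field_simp <;> ring
  · intro m v
    rw [fd_x, fd_y, fd_z, fd_p, fd_q, p₂, q₂]
    refine ⟨?_, ?_, ?_, ?_⟩
    · rw [hc2]
      linear_combination (m.2.2.2.2 * v.2.1 / 48) * hc3
    · rw [hc2]
      linear_combination (v.2.1 ^ 2 * (12:ℝ) ^ ((1:ℝ)/3) / 8) * hc3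
    · rw [hc2]
      linear_combination (-(v.2.1 * v.2.2.2.2) / 12) * hc3
    · rw [hc2]
      ring
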